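/- The family D(U, C) of all definable sets with respect to a covering C, ordered by set inclusion, forms a lattice (with join given by union and meet given by intersection). -/

import Mathlib

variable {α : Type*}

/-- `C` is a covering of `U`: every member is nonempty and their union is `U`. -/
def IsCovering (U : Set α) (C : Set (Set α)) : Prop :=
  (∀ K ∈ C, K.Nonempty) ∧ ⋃₀ C = U

/-- The neighborhood of `x`: intersection of all members of `C` containing `x`. -/
def nbhd (C : Set (Set α)) (x : α) : Set α :=
  ⋂₀ {K | K ∈ C ∧ x ∈ K}

/-- `X` is definable w.r.t. `C` if it is the union of the neighborhoods of its points. -/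
def Definable (C : Set (Set α)) (X : Set α) : Prop :=
  X = ⋃ x ∈ X, nbhd C x

/-- The family of all definable subsets of `U` w.r.t. `C`. -/
def DefinableSets (U : Set α) (C : Set (Set α)) : Set (Set α) :=
  {X | X ⊆ U ∧ Definable C X}

/-- Covering-based lower approximation. -/
def lowerApprox (U : Set α) (C : Set (Set α)) (X : Set α) : Set α :=
  {x ∈ U | nbhd C x ⊆ X}

/-- Covering-based upper approximation. -/
def upperApprox (U : Set α) (C : Set (Set α)) (X : Set α) : Set α :=
  {x ∈ U | (nbhd C x ∩ X).Nonempty}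

/-- Rough matroid based on a covering `C` of `U`. -/
def RoughMatroid (U : Set α) (C : Set (Set α)) (I : Set (Set α)) : Prop :=
  I ⊆ DefinableSets U C ∧
  ∅ ∈ I ∧
  (∀ I₀ ∈ I, ∀ I', I' ⊆ I₀ → I' ∈ DefinableSets U C → I' ∈ I) ∧
  (∀ I₁ ∈ I, ∀ I₂ ∈ I, I₁.ncard < I₂.ncard →
    ∃ I₀ ∈ I, I₁ ⊂ I₀ ∧ I₀ ⊆ I₁ ∪ I₂)

/-- Matroid independence axioms (I1)-(I3). -/
def MatroidInd (I : Set (Set α)) : Prop :=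
  ∅ ∈ I ∧
  (∀ X ∈ I, ∀ Y, Y ⊆ X → Y ∈ I) ∧
  (∀ I₁ ∈ I, ∀ I₂ ∈ I, I₁.ncard < I₂.ncard →
    ∃ e ∈ I₂ \ I₁, insert e I₁ ∈ I)

theorem mem_nbhd_self (C : Set (Set α)) (x : α) : x ∈ nbhd C x :=
  fun _ hK => hK.2

theorem definable_iff_nbhd_subset {C : Set (Set α)} {X : Set α} :
    Definable C X ↔ ∀ x ∈ X, nbhd C x ⊆ X := by
  refine ⟨fun h x hx y hy => h ▸ Set.mem_biUnion hx hy, fun h => ?_⟩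
  exact Set.Subset.antisymm (fun x hx => Set.mem_biUnion hx (mem_nbhd_self C x))
    (Set.iUnion₂_subset h)

theorem Definable.union {C : Set (Set α)} {X Y : Set α} (hX : Definable C X)
    (hY : Definable C Y) : Definable C (X ∪ Y) := by
  rw [definable_iff_nbhd_subset] at *
  rintro x (hx | hx)
  · exact (hX x hx).trans Set.subset_union_left
  · exact (hY x hx).trans Set.subset_union_right

theorem Definable.inter {C : Set (Set α)} {X Y : Set α} (hX : Definable C X)
    (hY : Definable C Y) : Definable C (X ∩ Y) := by
  rw [definable_iff_nbhd_subset] at *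
  exact fun x hx => Set.subset_inter (hX x hx.1) (hY x hx.2)

def definableSublattice (U : Set α) (C : Set (Set α)) : Sublattice (Set α) where
  carrier := DefinableSets U C
  supClosed' _ hX _ hY := ⟨Set.union_subset hX.1 hY.1, hX.2.union hY.2⟩
  infClosed' _ hX _ hY := ⟨Set.inter_subset_left.trans hX.1, hX.2.inter hY.2⟩

theorem definableSets_lattice_general {U : Set α} {C : Set (Set α)} :
    ∃ inst : Lattice (DefinableSets U C),
      (∀ a b : DefinableSets U C, inst.le a b ↔ (a : Set α) ⊆ (b : Set α)) ∧
      (∀ a b : DefinableSets U C, ((inst.sup a b : DefinableSets U C) : Set α) = ↑a ∪ ↑b) ∧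
      (∀ a b : DefinableSets U C, ((inst.inf a b : DefinableSets U C) : Set α) = ↑a ∩ ↑b) :=
  ⟨(definableSublattice U C).instLatticeCoe, fun _ _ => Iff.rfl, fun _ _ => rfl, fun _ _ => rfl⟩

theorem definableSets_lattice {U : Set α} {C : Set (Set α)} (hU : U.Finite)
    (hC : IsCovering U C) :
    ∃ inst : Lattice (DefinableSets U C),
      (∀ a b : DefinableSets U C, inst.le a b ↔ (a : Set α) ⊆ (b : Set α)) ∧
      (∀ a b : DefinableSets U C, ((inst.sup a b : DefinableSets U C) : Set α) = ↑a ∪ ↑b) ∧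
      (∀ a b : DefinableSets U C, ((inst.inf a b : DefinableSets U C) : Set α) = ↑a ∩ ↑b) :=
  definableSets_lattice_general
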